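/- Let R be a unital associative superalgebra over k with 2 invertible. The first Z/2Z-graded cyclic homology group HC_1(R⊗Q1) equals { ∑_j h(a_j⊗1, b_j⊗ν) : a_j, b_j ∈ R with ∑_j [a_j, b_j] = 0 }, i.e., every class in HC_1(R⊗Q1) is a sum of classes h(a⊗1, b⊗ν) and such a sum lies in HC_1(R⊗Q1) iff the sum of graded commutators ∑[a_j,b_j] vanishes in R. -/
import Mathlib


open TensorProduct

variable {k : Type} [CommRing k] [Invertible (2 : k)]
variable {R : Type} [Ring R] [Algebra k R]

/-- The multiplication of the graded tensor product `R ⊗ Q1`, in the model where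
`(a, b)` represents `a ⊗ 1 + b ⊗ ν` (with `ν` odd, `ν² = 1`, Koszul signs via the
grading involution `σ` of `R`). -/
def mulQ (σ : R ≃ₐ[k] R) (p q : R × R) : R × R :=
  (p.1 * q.1 + p.2 * σ q.2, p.1 * q.2 + p.2 * σ q.1)

/-- The grading involution of `R ⊗ Q1` in the model above. -/
def tauQ (σ : R ≃ₐ[k] R) (p : R × R) : R × R := (σ p.1, -σ p.2)

/-- The submodule `I_A ⊆ A ⊗ A` of relations for the first cyclic homology of a superalgebra
`A` (multiplication `mul`, grading involution `s`): it is spanned by the graded symmetry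
relations `x ⊗ y + (-1)^{|x||y|} y ⊗ x` and the graded cyclic relations
`(-1)^{|x||z|} xy ⊗ z + (-1)^{|y||x|} yz ⊗ x + (-1)^{|z||y|} zx ⊗ y`
for homogeneous `x, y, z ∈ A`. -/
def cycRel (A : Type) [AddCommGroup A] [Module k A] (mul : A → A → A) (s : A → A) :
    Submodule k (A ⊗[k] A) :=
  Submodule.span k
    {w | (∃ x y : A, ∃ px py : ZMod 2,
            s x = ((-1 : ℤ) ^ px.val) • x ∧ s y = ((-1 : ℤ) ^ py.val) • y ∧
            w = x ⊗ₜ[k] y + ((-1 : ℤ) ^ (px * py).val) • (y ⊗ₜ[k] x)) ∨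
         (∃ x y z : A, ∃ px py pz : ZMod 2,
            s x = ((-1 : ℤ) ^ px.val) • x ∧ s y = ((-1 : ℤ) ^ py.val) • y ∧
            s z = ((-1 : ℤ) ^ pz.val) • z ∧
            w = ((-1 : ℤ) ^ (px * pz).val) • (mul x y ⊗ₜ[k] z)
              + ((-1 : ℤ) ^ (py * px).val) • (mul y z ⊗ₜ[k] x)
              + ((-1 : ℤ) ^ (pz * py).val) • (mul z x ⊗ₜ[k] y))}

/-- `⟨x, y⟩`, the class of `x ⊗ y` in `⟨A, A⟩ = (A ⊗ A)/I_A`. -/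
noncomputable def hcl (A : Type) [AddCommGroup A] [Module k A] (mul : A → A → A) (s : A → A) (x y : A) :
    (A ⊗[k] A) ⧸ cycRel (k := k) A mul s :=
  Submodule.Quotient.mk (x ⊗ₜ[k] y)

/-- The graded commutator `[x,y] = xy - (-1)^{|x||y|} yx` of a superalgebra `A`
(multiplication `mul`, grading involution `s`), extended bilinearly to all elements:
`[x,y] = xy - ½(y(x + s x) + (s y)(x - s x))`. -/
def sCommF (A : Type) [AddCommGroup A] [Module k A] (mul : A → A → A) (s : A → A)
    (x y : A) : A :=
  mul x y - (⅟(2 : k)) • (mul y (x + s x) + mul (s y) (x - s x))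

/-- The first `ℤ/2ℤ`-graded cyclic homology group `HC₁(A)` of a superalgebra `A`, as the set
of classes `∑ h(x_i, y_i) ∈ ⟨A, A⟩` with `∑ [x_i, y_i] = 0` in `A`. -/
def HC1Set (A : Type) [AddCommGroup A] [Module k A] (mul : A → A → A) (s : A → A) :
    Set ((A ⊗[k] A) ⧸ cycRel (k := k) A mul s) :=
  {z | ∃ (m : ℕ) (x y : Fin m → A),
    z = ∑ i, hcl (k := k) A mul s (x i) (y i) ∧
    ∑ i, sCommF (k := k) A mul s (x i) (y i) = 0}


section Aux
set_option linter.unusedSectionVars false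

section
variable (σ : R ≃ₐ[k] R)

/-- mulQ as a bilinear map -/
def mulQL : (R × R) →ₗ[k] (R × R) →ₗ[k] (R × R) :=
  LinearMap.mk₂ k (mulQ σ)
    (fun p p' q => by simp [mulQ, add_mul, Prod.ext_iff]; constructor <;> abel)
    (fun c p q => by simp [mulQ, Prod.smul_def, smul_mul_assoc, mul_add, Prod.ext_iff, smul_add])
    (fun p q q' => by simp [mulQ, mul_add, Prod.ext_iff]; constructor <;> abel)
    (fun c p q => by simp [mulQ, Prod.smul_def, mul_smul_comm, Prod.ext_iff, smul_add, map_smul])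

/-- tauQ as a linear map -/
def tauQL : (R × R) →ₗ[k] (R × R) where
  toFun := tauQ σ
  map_add' p q := by simp [tauQ, Prod.ext_iff]; abel
  map_smul' c p := by simp [tauQ, Prod.smul_def, map_smul, Prod.ext_iff]

end

section
variable (σ : R ≃ₐ[k] R)

lemma mq_addl (p p' q : R × R) : mulQ σ (p + p') q = mulQ σ p q + mulQ σ p' q :=
  (mulQL σ).map_add₂ p p' q

lemma mq_addr (p q q' : R × R) : mulQ σ p (q + q') = mulQ σ p q + mulQ σ p q' :=
  ((mulQL σ) p).map_add q q'

lemma mq_smull (c : k) (p q : R × R) : mulQ σ (c • p) q = c • mulQ σ p q :=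
  (mulQL σ).map_smul₂ c p q

lemma mq_smulr (c : k) (p q : R × R) : mulQ σ p (c • q) = c • mulQ σ p q :=
  ((mulQL σ) p).map_smul c q

lemma mq_negl (p q : R × R) : mulQ σ (-p) q = - mulQ σ p q :=
  map_neg ((mulQL σ).flip q) p

lemma mq_negr (p q : R × R) : mulQ σ p (-q) = - mulQ σ p q :=
  map_neg ((mulQL σ) p) q

lemma mq_subl (p p' q : R × R) : mulQ σ (p - p') q = mulQ σ p q - mulQ σ p' q :=
  map_sub ((mulQL σ).flip q) p p'

lemma mq_subr (p q q' : R × R) : mulQ σ p (q - q') = mulQ σ p q - mulQ σ p q' :=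
  map_sub ((mulQL σ) p) q q'

lemma mq_zerol (q : R × R) : mulQ σ 0 q = 0 := map_zero ((mulQL σ).flip q)

lemma mq_zeror (p : R × R) : mulQ σ p 0 = 0 := map_zero ((mulQL σ) p)

lemma tq_add (p q : R × R) : tauQ σ (p + q) = tauQ σ p + tauQ σ q := map_add (tauQL σ) p q

lemma tq_smul (c : k) (p : R × R) : tauQ σ (c • p) = c • tauQ σ p := map_smul (tauQL σ) c p

lemma tq_neg (p : R × R) : tauQ σ (-p) = - tauQ σ p := map_neg (tauQL σ) p

lemma tq_sub (p q : R × R) : tauQ σ (p - q) = tauQ σ p - tauQ σ q := map_sub (tauQL σ) p q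

lemma half_add {M : Type} [AddCommGroup M] [Module k M] (a : M) :
    (⅟(2:k)) • (a + a) = a := by
  rw [← two_smul k a, smul_smul, invOf_mul_self, one_smul]

/-- sCommF for R×R as a bilinear map -/
def scB : (R × R) →ₗ[k] (R × R) →ₗ[k] (R × R) :=
  LinearMap.mk₂ k (sCommF (k := k) (R × R) (mulQ σ) (tauQ σ))
    (fun x x' y => by
      simp only [sCommF, tq_add, tq_smul, mq_addl, mq_addr, mq_subl, mq_subr, mq_smull, mq_smulr, smul_add, smul_sub]
      module)
    (fun c x y => by
      simp only [sCommF, tq_add, tq_smul, mq_addl, mq_addr, mq_subl, mq_subr, mq_smull, mq_smulr, smul_add, smul_sub]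
      module)
    (fun x y y' => by
      simp only [sCommF, tq_add, tq_smul, mq_addl, mq_addr, mq_subl, mq_subr, mq_smull, mq_smulr, smul_add, smul_sub]
      module)
    (fun c x y => by
      simp only [sCommF, tq_add, tq_smul, mq_addl, mq_addr, mq_subl, mq_subr, mq_smull, mq_smulr, smul_add, smul_sub]
      module)

lemma scB_apply (x y : R × R) : scB σ x y = sCommF (k := k) (R × R) (mulQ σ) (tauQ σ) x y := rfl

end

section
variable (σ : R ≃ₐ[k] R)

lemma sComm_even {x : R × R} (hx : tauQ σ x = x) (y : R × R) :
    sCommF (k := k) (R × R) (mulQ σ) (tauQ σ) x y = mulQ σ x y - mulQ σ y x := by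
  rw [sCommF, hx, sub_self, mq_zeror, add_zero]
  congr 1
  rw [mq_addr, half_add]

lemma sComm_odd {x : R × R} (hx : tauQ σ x = -x) (y : R × R) :
    sCommF (k := k) (R × R) (mulQ σ) (tauQ σ) x y = mulQ σ x y - mulQ σ (tauQ σ y) x := by
  rw [sCommF, hx, add_neg_cancel, mq_zeror, zero_add, sub_neg_eq_add, mq_addr, half_add]

lemma tq_mul (hσ : ∀ a, σ (σ a) = a) (p q : R × R) : tauQ σ (mulQ σ p q) = mulQ σ (tauQ σ p) (tauQ σ q) := by
  simp [tauQ, mulQ, Prod.ext_iff, map_add, map_mul, hσ, neg_mul, mul_neg]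
  abel

lemma mq_assoc (hσ : ∀ a, σ (σ a) = a) (p q r : R × R) : mulQ σ (mulQ σ p q) r = mulQ σ p (mulQ σ q r) := by
  simp only [mulQ, Prod.ext_iff, map_add, map_mul, hσ, mul_add, add_mul, mul_assoc]
  constructor <;> abel

end


section
variable (σ : R ≃ₐ[k] R)

lemma zmod2_cases : ∀ p : ZMod 2, p = 0 ∨ p = 1 := by decide

lemma cyc_le_ker (hσ : ∀ a, σ (σ a) = a) :
    cycRel (k := k) (R × R) (mulQ σ) (tauQ σ) ≤
      LinearMap.ker (TensorProduct.lift (scB σ)) := by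
  rw [cycRel, Submodule.span_le]
  rintro w (⟨x,y,px,py,hx,hy,rfl⟩|⟨x,y,z,px,py,pz,hx,hy,hz,rfl⟩)
  · simp only [SetLike.mem_coe, LinearMap.mem_ker, map_add, map_zsmul,
      TensorProduct.lift.tmul, scB_apply]
    rcases zmod2_cases px with rfl|rfl <;> rcases zmod2_cases py with rfl|rfl <;>
      simp only [mul_zero, zero_mul, mul_one, one_mul, ZMod.val_zero, ZMod.val_one,
        pow_zero, pow_one, one_smul, neg_one_zsmul] at hx hy ⊢
    · rw [sComm_even σ hx, sComm_even σ hy]; abel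
    · rw [sComm_even σ hx, sComm_odd σ hy, hx]; abel
    · rw [sComm_odd σ hx, sComm_even σ hy, hy]; abel
    · rw [sComm_odd σ hx, sComm_odd σ hy, hx, hy, mq_negl, mq_negl]; abel
  · simp only [SetLike.mem_coe, LinearMap.mem_ker, map_add, map_zsmul,
      TensorProduct.lift.tmul, scB_apply]
    rcases zmod2_cases px with rfl|rfl <;> rcases zmod2_cases py with rfl|rfl <;>
        rcases zmod2_cases pz with rfl|rfl <;>
      simp only [mul_zero, zero_mul, mul_one, one_mul, ZMod.val_zero, ZMod.val_one,
        pow_zero, pow_one, one_smul, neg_one_zsmul] at hx hy hz ⊢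
    · -- (0,0,0)
      have hxy : tauQ σ (mulQ σ x y) = mulQ σ x y := by rw [tq_mul σ hσ, hx, hy]
      have hyz : tauQ σ (mulQ σ y z) = mulQ σ y z := by rw [tq_mul σ hσ, hy, hz]
      have hzx : tauQ σ (mulQ σ z x) = mulQ σ z x := by rw [tq_mul σ hσ, hz, hx]
      rw [sComm_even σ hxy, sComm_even σ hyz, sComm_even σ hzx]
      simp only [mq_assoc σ hσ]; abel
    · -- (0,0,1)
      have hxy : tauQ σ (mulQ σ x y) = mulQ σ x y := by rw [tq_mul σ hσ, hx, hy]
      have hyz : tauQ σ (mulQ σ y z) = -mulQ σ y z := by rw [tq_mul σ hσ, hy, hz, mq_negr]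
      have hzx : tauQ σ (mulQ σ z x) = -mulQ σ z x := by rw [tq_mul σ hσ, hz, hx, mq_negl]
      rw [sComm_even σ hxy, sComm_odd σ hyz, sComm_odd σ hzx]
      simp only [hx, hy, hz, mq_negl, mq_negr, mq_assoc σ hσ, neg_neg]; abel
    · -- (0,1,0)
      have hxy : tauQ σ (mulQ σ x y) = -mulQ σ x y := by rw [tq_mul σ hσ, hx, hy, mq_negr]
      have hyz : tauQ σ (mulQ σ y z) = -mulQ σ y z := by rw [tq_mul σ hσ, hy, hz, mq_negl]
      have hzx : tauQ σ (mulQ σ z x) = mulQ σ z x := by rw [tq_mul σ hσ, hz, hx]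
      rw [sComm_odd σ hxy, sComm_odd σ hyz, sComm_even σ hzx]
      simp only [hx, hy, hz, mq_negl, mq_negr, mq_assoc σ hσ, neg_neg]; abel
    · -- (0,1,1)
      have hxy : tauQ σ (mulQ σ x y) = -mulQ σ x y := by rw [tq_mul σ hσ, hx, hy, mq_negr]
      have hyz : tauQ σ (mulQ σ y z) = mulQ σ y z := by
        rw [tq_mul σ hσ, hy, hz, mq_negl, mq_negr, neg_neg]
      have hzx : tauQ σ (mulQ σ z x) = -mulQ σ z x := by rw [tq_mul σ hσ, hz, hx, mq_negl]
      rw [sComm_odd σ hxy, sComm_even σ hyz, sComm_odd σ hzx]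
      simp only [hx, hy, hz, mq_negl, mq_negr, mq_assoc σ hσ, neg_neg]; abel
    · -- (1,0,0)
      have hxy : tauQ σ (mulQ σ x y) = -mulQ σ x y := by rw [tq_mul σ hσ, hx, hy, mq_negl]
      have hyz : tauQ σ (mulQ σ y z) = mulQ σ y z := by rw [tq_mul σ hσ, hy, hz]
      have hzx : tauQ σ (mulQ σ z x) = -mulQ σ z x := by rw [tq_mul σ hσ, hz, hx, mq_negr]
      rw [sComm_odd σ hxy, sComm_even σ hyz, sComm_odd σ hzx]
      simp only [hx, hy, hz, mq_negl, mq_negr, mq_assoc σ hσ, neg_neg]; abel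
    · -- (1,0,1)
      have hxy : tauQ σ (mulQ σ x y) = -mulQ σ x y := by rw [tq_mul σ hσ, hx, hy, mq_negl]
      have hyz : tauQ σ (mulQ σ y z) = -mulQ σ y z := by rw [tq_mul σ hσ, hy, hz, mq_negr]
      have hzx : tauQ σ (mulQ σ z x) = mulQ σ z x := by
        rw [tq_mul σ hσ, hz, hx, mq_negl, mq_negr, neg_neg]
      rw [sComm_odd σ hxy, sComm_odd σ hyz, sComm_even σ hzx]
      simp only [hx, hy, hz, mq_negl, mq_negr, mq_assoc σ hσ, neg_neg]; abel
    · -- (1,1,0)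
      have hxy : tauQ σ (mulQ σ x y) = mulQ σ x y := by
        rw [tq_mul σ hσ, hx, hy, mq_negl, mq_negr, neg_neg]
      have hyz : tauQ σ (mulQ σ y z) = -mulQ σ y z := by rw [tq_mul σ hσ, hy, hz, mq_negl]
      have hzx : tauQ σ (mulQ σ z x) = -mulQ σ z x := by rw [tq_mul σ hσ, hz, hx, mq_negr]
      rw [sComm_even σ hxy, sComm_odd σ hyz, sComm_odd σ hzx]
      simp only [hx, hy, hz, mq_negl, mq_negr, mq_assoc σ hσ, neg_neg]; abel
    · -- (1,1,1)
      have hxy : tauQ σ (mulQ σ x y) = mulQ σ x y := by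
        rw [tq_mul σ hσ, hx, hy, mq_negl, mq_negr, neg_neg]
      have hyz : tauQ σ (mulQ σ y z) = mulQ σ y z := by
        rw [tq_mul σ hσ, hy, hz, mq_negl, mq_negr, neg_neg]
      have hzx : tauQ σ (mulQ σ z x) = mulQ σ z x := by
        rw [tq_mul σ hσ, hz, hx, mq_negl, mq_negr, neg_neg]
      rw [sComm_even σ hxy, sComm_even σ hyz, sComm_even σ hzx]
      simp only [mq_assoc σ hσ]; abel
end

section
variable (σ : R ≃ₐ[k] R)

noncomputable def CommQ (hσ : ∀ a, σ (σ a) = a) :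
    (((R × R) ⊗[k] (R × R)) ⧸ cycRel (k := k) (R × R) (mulQ σ) (tauQ σ)) →ₗ[k] (R × R) :=
  Submodule.liftQ _ (TensorProduct.lift (scB σ)) (cyc_le_ker σ hσ)

lemma hcl_mk (x y : R × R) : hcl (k:=k) (R × R) (mulQ σ) (tauQ σ) x y =
    Submodule.mkQ _ (x ⊗ₜ[k] y) := rfl

lemma CommQ_hcl (hσ : ∀ a, σ (σ a) = a) (x y : R × R) :
    CommQ σ hσ (hcl (k:=k) (R × R) (mulQ σ) (tauQ σ) x y) =
      sCommF (k := k) (R × R) (mulQ σ) (tauQ σ) x y := by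
  rfl

end

section
variable (σ : R ≃ₐ[k] R)

/-- The submodule of classes of pure form `∑ h((a,0),(0,b))`. -/
noncomputable def PP : Submodule k
    (((R × R) ⊗[k] (R × R)) ⧸ cycRel (k := k) (R × R) (mulQ σ) (tauQ σ)) :=
  Submodule.span k
    {z | ∃ a b : R, z = hcl (k:=k) (R × R) (mulQ σ) (tauQ σ) (a, 0) (0, b)}

/-- `n b = h((0,b),(0,1))` as a linear map in `b`. -/
noncomputable def nL : R →ₗ[k]
    (((R × R) ⊗[k] (R × R)) ⧸ cycRel (k := k) (R × R) (mulQ σ) (tauQ σ)) :=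
  (Submodule.mkQ _) ∘ₗ ((TensorProduct.mk k (R × R) (R × R)).flip ((0 : R), (1 : R))) ∘ₗ
    (LinearMap.inr k R R)

lemma nL_apply (b : R) :
    nL σ b = hcl (k:=k) (R × R) (mulQ σ) (tauQ σ) ((0 : R), b) ((0 : R), (1 : R)) := rfl

lemma hcl_negl (x y : R × R) :
    hcl (k:=k) (R × R) (mulQ σ) (tauQ σ) (-x) y
      = - hcl (k:=k) (R × R) (mulQ σ) (tauQ σ) x y := by
  rw [hcl_mk, hcl_mk, TensorProduct.neg_tmul, map_neg]

lemma mq_ee (a c : R) : mulQ σ ((a,0) : R × R) ((c,0) : R × R) = (a*c, 0) := by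
  simp [mulQ]
lemma mq_eo (a c : R) : mulQ σ ((a,0) : R × R) ((0,c) : R × R) = (0, a*c) := by
  simp [mulQ]
lemma mq_oe (e a : R) : mulQ σ ((0,e) : R × R) ((a,0) : R × R) = (0, e * σ a) := by
  simp [mulQ]
lemma mq_oo (c e : R) : mulQ σ ((0,c) : R × R) ((0,e) : R × R) = (c * σ e, 0) := by
  simp [mulQ]

lemma par_e0 {a : R} (ha : σ a = a) :
    tauQ σ ((a,0) : R × R) = ((-1 : ℤ) ^ (0 : ZMod 2).val) • ((a,0) : R × R) := by
  simp [tauQ, ha, show ((0 : ZMod 2)).val = 0 from rfl]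
lemma par_e1 {a : R} (ha : σ a = -a) :
    tauQ σ ((a,0) : R × R) = ((-1 : ℤ) ^ (1 : ZMod 2).val) • ((a,0) : R × R) := by
  simp [tauQ, ha, Prod.ext_iff, show ((1 : ZMod 2)).val = 1 from rfl]
lemma par_o1 {b : R} (hb : σ b = b) :
    tauQ σ ((0,b) : R × R) = ((-1 : ℤ) ^ (1 : ZMod 2).val) • ((0,b) : R × R) := by
  simp [tauQ, hb, Prod.ext_iff, show ((1 : ZMod 2)).val = 1 from rfl]
lemma par_o0 {b : R} (hb : σ b = -b) :
    tauQ σ ((0,b) : R × R) = ((-1 : ℤ) ^ (0 : ZMod 2).val) • ((0,b) : R × R) := by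
  simp [tauQ, hb, Prod.ext_iff, show ((0 : ZMod 2)).val = 0 from rfl]

/-- symmetry relation in the quotient -/
lemma symRel (x y : R × R) (px py : ZMod 2)
    (hx : tauQ σ x = ((-1 : ℤ) ^ px.val) • x) (hy : tauQ σ y = ((-1 : ℤ) ^ py.val) • y) :
    hcl (k:=k) (R × R) (mulQ σ) (tauQ σ) x y
      + ((-1 : ℤ) ^ (px * py).val) • hcl (k:=k) (R × R) (mulQ σ) (tauQ σ) y x = 0 := by
  rw [hcl_mk, hcl_mk, ← map_zsmul, ← map_add]
  rw [Submodule.mkQ_apply, Submodule.Quotient.mk_eq_zero]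
  exact Submodule.subset_span (Or.inl ⟨x, y, px, py, hx, hy, rfl⟩)

/-- cyclic relation in the quotient -/
lemma cycRel3 (x y z : R × R) (px py pz : ZMod 2)
    (hx : tauQ σ x = ((-1 : ℤ) ^ px.val) • x) (hy : tauQ σ y = ((-1 : ℤ) ^ py.val) • y)
    (hz : tauQ σ z = ((-1 : ℤ) ^ pz.val) • z) :
    ((-1 : ℤ) ^ (px * pz).val) • hcl (k:=k) (R × R) (mulQ σ) (tauQ σ) (mulQ σ x y) z
      + ((-1 : ℤ) ^ (py * px).val) • hcl (k:=k) (R × R) (mulQ σ) (tauQ σ) (mulQ σ y z) x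
      + ((-1 : ℤ) ^ (pz * py).val) • hcl (k:=k) (R × R) (mulQ σ) (tauQ σ) (mulQ σ z x) y
      = 0 := by
  rw [hcl_mk, hcl_mk, hcl_mk, ← map_zsmul, ← map_zsmul, ← map_zsmul, ← map_add, ← map_add]
  rw [Submodule.mkQ_apply, Submodule.Quotient.mk_eq_zero]
  exact Submodule.subset_span (Or.inr ⟨x, y, z, px, py, pz, hx, hy, hz, rfl⟩)

lemma half_solve {M : Type} [AddCommGroup M] [Module k M] {u v w1 w2 : M}
    (h1 : w1 + u - v = 0) (h2 : v + u - w2 = 0) : u = (⅟(2:k)) • (w2 - w1) := by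
  rw [sub_eq_zero] at h1 h2
  rw [← h1] at h2
  have h3 : u + u = w2 - w1 := by rw [← h2]; abel
  rw [← h3, half_add]

lemma half_solve2 {M : Type} [AddCommGroup M] [Module k M] {u v w1 w2 : M}
    (h1 : w1 + u + v = 0) (h2 : v - u + w2 = 0) : u = (⅟(2:k)) • (w2 - w1) := by
  have hv : v = -w1 - u := by rw [← sub_eq_zero, ← h1]; abel
  rw [hv] at h2
  have h2' : -(-w1 - u - u + w2) = 0 := by rw [h2, neg_zero]
  have h3 : u + u = w2 - w1 := by rw [← sub_eq_zero, ← h2']; abel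
  rw [← h3, half_add]

lemma half_solve3 {M : Type} [AddCommGroup M] [Module k M] {u v w1 w2 : M}
    (h1 : u - v - w1 = 0) (h2 : v + u - w2 = 0) : u = (⅟(2:k)) • (w2 + w1) := by
  have h1' : -(u - v - w1) = 0 := by rw [h1, neg_zero]
  have hv : v = u - w1 := by rw [← sub_eq_zero, ← h1']; abel
  rw [hv] at h2
  have h3 : u + u = w2 + w1 := by rw [← sub_eq_zero, ← h2]; abel
  rw [← h3, half_add]

end

section
variable (σ : R ≃ₐ[k] R)

lemma hcl_neg_ol (b : R) (y : R × R) :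
    hcl (k:=k) (R × R) (mulQ σ) (tauQ σ) ((0 : R), -b) y
      = - hcl (k:=k) (R × R) (mulQ σ) (tauQ σ) ((0 : R), b) y := by
  rw [show (((0 : R), -b) : R × R) = -((0 : R), b) from by simp, hcl_negl]

lemma hcl_neg_el (a : R) (y : R × R) :
    hcl (k:=k) (R × R) (mulQ σ) (tauQ σ) ((-a, (0 : R)) : R × R) y
      = - hcl (k:=k) (R × R) (mulQ σ) (tauQ σ) ((a, (0 : R)) : R × R) y := by
  rw [show ((-a, (0 : R)) : R × R) = -((a, (0 : R)) : R × R) from by simp, hcl_negl]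

lemma KEY3pp (a c : R) (ha : σ a = a) (hc : σ c = c) :
    hcl (k:=k) (R × R) (mulQ σ) (tauQ σ) ((a, 0) : R × R) ((c, 0) : R × R)
      = (⅟(2:k)) • nL σ (a*c) - (⅟(2:k)) • nL σ (c*a) := by
  have e1 := cycRel3 σ ((c,0)) ((0,a)) ((0,(1:R))) 0 1 1 (par_e0 σ hc) (par_o1 σ ha)
    (par_o1 σ (map_one σ))
  have e2 := cycRel3 σ ((c,0)) ((0,(1:R))) ((0,a)) 0 1 1 (par_e0 σ hc)
    (par_o1 σ (map_one σ)) (par_o1 σ ha)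
  simp only [mq_eo, mq_oo, mq_oe, mq_ee, map_one, mul_one, one_mul, ha, hc,
    mul_zero, zero_mul, ZMod.val_zero, ZMod.val_one,
    pow_zero, pow_one, one_smul, neg_one_zsmul, map_neg, ← nL_apply] at e1 e2
  have h3 : hcl (k:=k) (R × R) (mulQ σ) (tauQ σ) ((a, 0) : R × R) ((c, 0) : R × R)
      + hcl (k:=k) (R × R) (mulQ σ) (tauQ σ) ((a, 0) : R × R) ((c, 0) : R × R)
      = nL σ (a*c) - nL σ (c*a) := by
    linear_combination (norm := module) e1 + e2
  rw [← half_add (k := k) (hcl (k:=k) (R × R) (mulQ σ) (tauQ σ) ((a, 0) : R × R)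
    ((c, 0) : R × R)), h3, smul_sub]

end

section
variable (σ : R ≃ₐ[k] R)

lemma KEY3pm (a c : R) (ha : σ a = a) (hc : σ c = -c) :
    hcl (k:=k) (R × R) (mulQ σ) (tauQ σ) ((a, 0) : R × R) ((c, 0) : R × R)
      = (⅟(2:k)) • nL σ (a*c) - (⅟(2:k)) • nL σ (c*a) := by
  have e1 := cycRel3 σ ((c,0)) ((0,a)) ((0,(1:R))) 1 1 1 (par_e1 σ hc) (par_o1 σ ha)
    (par_o1 σ (map_one σ))
  have e2 := cycRel3 σ ((c,0)) ((0,(1:R))) ((0,a)) 1 1 1 (par_e1 σ hc)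
    (par_o1 σ (map_one σ)) (par_o1 σ ha)
  simp only [mq_eo, mq_oo, mq_oe, mq_ee, map_one, mul_one, one_mul, ha, hc,
    mul_neg, neg_mul, hcl_neg_ol, hcl_neg_el,
    mul_zero, zero_mul, ZMod.val_zero, ZMod.val_one,
    pow_zero, pow_one, one_smul, neg_one_zsmul, map_neg, ← nL_apply] at e1 e2
  have h3 : hcl (k:=k) (R × R) (mulQ σ) (tauQ σ) ((a, 0) : R × R) ((c, 0) : R × R)
      + hcl (k:=k) (R × R) (mulQ σ) (tauQ σ) ((a, 0) : R × R) ((c, 0) : R × R)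
      = nL σ (a*c) - nL σ (c*a) := by
    linear_combination (norm := module) -(e1 + e2)
  rw [← half_add (k := k) (hcl (k:=k) (R × R) (mulQ σ) (tauQ σ) ((a, 0) : R × R)
    ((c, 0) : R × R)), h3, smul_sub]

lemma KEY3mp (a c : R) (ha : σ a = -a) (hc : σ c = c) :
    hcl (k:=k) (R × R) (mulQ σ) (tauQ σ) ((a, 0) : R × R) ((c, 0) : R × R)
      = (⅟(2:k)) • nL σ (a*c) - (⅟(2:k)) • nL σ (c*a) := by
  have e1 := cycRel3 σ ((c,0)) ((0,a)) ((0,(1:R))) 0 0 1 (par_e0 σ hc) (par_o0 σ ha)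
    (par_o1 σ (map_one σ))
  have e2 := cycRel3 σ ((c,0)) ((0,(1:R))) ((0,a)) 0 1 0 (par_e0 σ hc)
    (par_o1 σ (map_one σ)) (par_o0 σ ha)
  simp only [mq_eo, mq_oo, mq_oe, mq_ee, map_one, mul_one, one_mul, ha, hc,
    mul_neg, neg_mul, hcl_neg_ol, hcl_neg_el,
    mul_zero, zero_mul, ZMod.val_zero, ZMod.val_one,
    pow_zero, pow_one, one_smul, neg_one_zsmul, map_neg, ← nL_apply] at e1 e2
  have h3 : hcl (k:=k) (R × R) (mulQ σ) (tauQ σ) ((a, 0) : R × R) ((c, 0) : R × R)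
      + hcl (k:=k) (R × R) (mulQ σ) (tauQ σ) ((a, 0) : R × R) ((c, 0) : R × R)
      = nL σ (a*c) - nL σ (c*a) := by
    linear_combination (norm := module) e1 - e2
  rw [← half_add (k := k) (hcl (k:=k) (R × R) (mulQ σ) (tauQ σ) ((a, 0) : R × R)
    ((c, 0) : R × R)), h3, smul_sub]

lemma KEY3mm (a c : R) (ha : σ a = -a) (hc : σ c = -c) :
    hcl (k:=k) (R × R) (mulQ σ) (tauQ σ) ((a, 0) : R × R) ((c, 0) : R × R)
      = (⅟(2:k)) • nL σ (a*c) + (⅟(2:k)) • nL σ (c*a) := by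
  have e1 := cycRel3 σ ((c,0)) ((0,a)) ((0,(1:R))) 1 0 1 (par_e1 σ hc) (par_o0 σ ha)
    (par_o1 σ (map_one σ))
  have e2 := cycRel3 σ ((c,0)) ((0,(1:R))) ((0,a)) 1 1 0 (par_e1 σ hc)
    (par_o1 σ (map_one σ)) (par_o0 σ ha)
  simp only [mq_eo, mq_oo, mq_oe, mq_ee, map_one, mul_one, one_mul, ha, hc,
    mul_neg, neg_mul, hcl_neg_ol, hcl_neg_el,
    mul_zero, zero_mul, ZMod.val_zero, ZMod.val_one,
    pow_zero, pow_one, one_smul, neg_one_zsmul, map_neg, ← nL_apply] at e1 e2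
  have h3 : hcl (k:=k) (R × R) (mulQ σ) (tauQ σ) ((a, 0) : R × R) ((c, 0) : R × R)
      + hcl (k:=k) (R × R) (mulQ σ) (tauQ σ) ((a, 0) : R × R) ((c, 0) : R × R)
      = nL σ (a*c) + nL σ (c*a) := by
    linear_combination (norm := module) e1 + e2
  rw [← half_add (k := k) (hcl (k:=k) (R × R) (mulQ σ) (tauQ σ) ((a, 0) : R × R)
    ((c, 0) : R × R)), h3, smul_add]

end

section
variable (σ : R ≃ₐ[k] R)

lemma KEY4pp (b d : R) (hb : σ b = b) (hd : σ d = d) :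
    hcl (k:=k) (R × R) (mulQ σ) (tauQ σ) ((0, b) : R × R) ((0, d) : R × R) = (⅟(2:k)) • nL σ (b*d) + (⅟(2:k)) • nL σ (d*b) := by
  have e3 := cycRel3 σ ((b,0)) ((0,(1:R))) ((0,d)) 0 1 1 (par_e0 σ hb)
    (par_o1 σ (map_one σ)) (par_o1 σ hd)
  have key3 := KEY3pp σ d b hd hb
  simp only [mq_eo, mq_oo, mq_oe, mq_ee, map_one, mul_one, one_mul, hb, hd,
    mul_neg, neg_mul, hcl_neg_ol, hcl_neg_el,
    mul_zero, zero_mul, ZMod.val_zero, ZMod.val_one,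
    pow_zero, pow_one, one_smul, neg_one_zsmul, map_neg, ← nL_apply] at e3
  linear_combination (norm := (match_scalars <;> first | ring1 | linear_combination (invOf_mul_self (2:k)) | linear_combination (-1 : k) * (invOf_mul_self (2:k)))) e3 - key3

lemma KEY4pm (b d : R) (hb : σ b = b) (hd : σ d = -d) :
    hcl (k:=k) (R × R) (mulQ σ) (tauQ σ) ((0, b) : R × R) ((0, d) : R × R) = -((⅟(2:k)) • nL σ (b*d)) - (⅟(2:k)) • nL σ (d*b) := by
  have e3 := cycRel3 σ ((b,0)) ((0,(1:R))) ((0,d)) 0 1 0 (par_e0 σ hb)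
    (par_o1 σ (map_one σ)) (par_o0 σ hd)
  have key3 := KEY3mp σ d b hd hb
  simp only [mq_eo, mq_oo, mq_oe, mq_ee, map_one, mul_one, one_mul, hb, hd,
    mul_neg, neg_mul, hcl_neg_ol, hcl_neg_el,
    mul_zero, zero_mul, ZMod.val_zero, ZMod.val_one,
    pow_zero, pow_one, one_smul, neg_one_zsmul, map_neg, ← nL_apply] at e3
  linear_combination (norm := (match_scalars <;> first | ring1 | linear_combination (invOf_mul_self (2:k)) | linear_combination (-1 : k) * (invOf_mul_self (2:k)))) e3 + key3

lemma KEY4mp (b d : R) (hb : σ b = -b) (hd : σ d = d) :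
    hcl (k:=k) (R × R) (mulQ σ) (tauQ σ) ((0, b) : R × R) ((0, d) : R × R) = (⅟(2:k)) • nL σ (b*d) + (⅟(2:k)) • nL σ (d*b) := by
  have e3 := cycRel3 σ ((b,0)) ((0,(1:R))) ((0,d)) 1 1 1 (par_e1 σ hb)
    (par_o1 σ (map_one σ)) (par_o1 σ hd)
  have key3 := KEY3pm σ d b hd hb
  simp only [mq_eo, mq_oo, mq_oe, mq_ee, map_one, mul_one, one_mul, hb, hd,
    mul_neg, neg_mul, hcl_neg_ol, hcl_neg_el,
    mul_zero, zero_mul, ZMod.val_zero, ZMod.val_one,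
    pow_zero, pow_one, one_smul, neg_one_zsmul, map_neg, ← nL_apply] at e3
  linear_combination (norm := (match_scalars <;> first | ring1 | linear_combination (invOf_mul_self (2:k)) | linear_combination (-1 : k) * (invOf_mul_self (2:k)))) -e3 - key3

lemma KEY4mm (b d : R) (hb : σ b = -b) (hd : σ d = -d) :
    hcl (k:=k) (R × R) (mulQ σ) (tauQ σ) ((0, b) : R × R) ((0, d) : R × R) = -((⅟(2:k)) • nL σ (b*d)) + (⅟(2:k)) • nL σ (d*b) := by
  have e3 := cycRel3 σ ((b,0)) ((0,(1:R))) ((0,d)) 1 1 0 (par_e1 σ hb)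
    (par_o1 σ (map_one σ)) (par_o0 σ hd)
  have key3 := KEY3mm σ d b hd hb
  simp only [mq_eo, mq_oo, mq_oe, mq_ee, map_one, mul_one, one_mul, hb, hd,
    mul_neg, neg_mul, hcl_neg_ol, hcl_neg_el,
    mul_zero, zero_mul, ZMod.val_zero, ZMod.val_one,
    pow_zero, pow_one, one_smul, neg_one_zsmul, map_neg, ← nL_apply] at e3
  linear_combination (norm := (match_scalars <;> first | ring1 | linear_combination (invOf_mul_self (2:k)) | linear_combination (-1 : k) * (invOf_mul_self (2:k)))) e3 - key3

end

section
variable (σ : R ≃ₐ[k] R)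

lemma tq_e (c : R) : tauQ σ ((c, 0) : R × R) = (σ c, 0) := by simp [tauQ]
lemma tq_o (d : R) : tauQ σ ((0, d) : R × R) = (0, -σ d) := by simp [tauQ]

/-- the four types of homogeneous generators -/
def S4 : Set (R × R) :=
  {p | (∃ a, σ a = a ∧ p = (a,0)) ∨ (∃ a, σ a = -a ∧ p = (a,0)) ∨
       (∃ b, σ b = b ∧ p = (0,b)) ∨ (∃ b, σ b = -b ∧ p = (0,b))}

lemma S4_span (hσ : ∀ a, σ (σ a) = a) : Submodule.span k (S4 σ) = ⊤ := by
  rw [eq_top_iff]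
  rintro p -
  have hp : p = (⅟(2:k)) • (((p.1 + σ p.1, 0) : R × R) + ((p.1 - σ p.1, 0) : R × R)
      + ((0, p.2 + σ p.2) : R × R) + ((0, p.2 - σ p.2) : R × R)) := by
    have h1 : p.1 + σ p.1 + (p.1 - σ p.1) + 0 + 0 = p.1 + p.1 := by abel
    have h2 : (0 : R) + 0 + (p.2 + σ p.2) + (p.2 - σ p.2) = p.2 + p.2 := by abel
    rw [Prod.ext_iff]
    constructor
    · show p.1 = (⅟(2:k)) • (p.1 + σ p.1 + (p.1 - σ p.1) + 0 + 0)
      rw [h1, half_add]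
    · show p.2 = (⅟(2:k)) • ((0 : R) + 0 + (p.2 + σ p.2) + (p.2 - σ p.2))
      rw [h2, half_add]
  rw [hp]
  refine Submodule.smul_mem _ _ (add_mem (add_mem (add_mem ?_ ?_) ?_) ?_) <;>
    apply Submodule.subset_span
  · exact Or.inl ⟨p.1 + σ p.1, by rw [map_add, hσ, add_comm], rfl⟩
  · exact Or.inr (Or.inl ⟨p.1 - σ p.1, by rw [map_sub, hσ, neg_sub], rfl⟩)
  · exact Or.inr (Or.inr (Or.inl ⟨p.2 + σ p.2, by rw [map_add, hσ, add_comm], rfl⟩))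
  · exact Or.inr (Or.inr (Or.inr ⟨p.2 - σ p.2, by rw [map_sub, hσ, neg_sub], rfl⟩))

/-- the normalization linear map -/
noncomputable def LL : ((R × R) ⊗[k] (R × R)) →ₗ[k]
    (((R × R) ⊗[k] (R × R)) ⧸ cycRel (k := k) (R × R) (mulQ σ) (tauQ σ)) :=
  Submodule.mkQ _ - (⅟(2:k)) • ((nL σ) ∘ₗ (LinearMap.fst k R R) ∘ₗ (TensorProduct.lift (scB σ)))

lemma LL_tmul (x y : R × R) : LL σ (x ⊗ₜ[k] y) =
    hcl (k:=k) (R × R) (mulQ σ) (tauQ σ) x y - (⅟(2:k)) • nL σ ((sCommF (k:=k) (R × R) (mulQ σ) (tauQ σ) x y).1) := rfl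

lemma mixed_mem (b c : R) (pb pc : ZMod 2)
    (h1 : tauQ σ ((0,b) : R × R) = ((-1 : ℤ) ^ pb.val) • ((0,b) : R × R))
    (h2 : tauQ σ ((c,0) : R × R) = ((-1 : ℤ) ^ pc.val) • ((c,0) : R × R)) :
    hcl (k:=k) (R × R) (mulQ σ) (tauQ σ) ((0,b) : R × R) ((c,0) : R × R) ∈ PP σ := by
  have e := symRel σ ((0,b)) ((c,0)) pb pc h1 h2
  have h3 : hcl (k:=k) (R × R) (mulQ σ) (tauQ σ) ((0,b) : R × R) ((c,0) : R × R)
      = -(((-1 : ℤ) ^ (pb*pc).val) • hcl (k:=k) (R × R) (mulQ σ) (tauQ σ) ((c,0) : R × R) ((0,b) : R × R)) := by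
    linear_combination (norm := module) e
  rw [h3]
  exact neg_mem (Submodule.smul_of_tower_mem _ _ (Submodule.subset_span ⟨c, b, rfl⟩))

end

section
variable (σ : R ≃ₐ[k] R)

lemma C1 (hσ : ∀ a, σ (σ a) = a) :
    ∀ x ∈ S4 σ, ∀ y ∈ S4 σ, LL σ (x ⊗ₜ[k] y) ∈ PP σ := by
  rintro x (⟨a,ha,rfl⟩|⟨a,ha,rfl⟩|⟨b,hb,rfl⟩|⟨b,hb,rfl⟩) y
    (⟨c,hc,rfl⟩|⟨c,hc,rfl⟩|⟨d,hd,rfl⟩|⟨d,hd,rfl⟩)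
  · have hx : tauQ σ ((a,0) : R × R) = (a,0) := by simp [tauQ, ha, Prod.ext_iff]
    rw [LL_tmul, sComm_even σ hx]
    simp only [tq_e, tq_o, ha, hc, mq_ee, mq_eo, mq_oe, mq_oo, mul_neg, neg_mul,
      neg_neg, Prod.fst_sub, Prod.fst_add, Prod.fst_neg, map_sub, map_add, map_neg,
      smul_sub, smul_add, smul_neg, map_zero, smul_zero, sub_zero]
    convert zero_mem (PP σ) using 1
    linear_combination (norm := module) KEY3pp σ a c ha hc
  · have hx : tauQ σ ((a,0) : R × R) = (a,0) := by simp [tauQ, ha, Prod.ext_iff]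
    rw [LL_tmul, sComm_even σ hx]
    simp only [tq_e, tq_o, ha, hc, mq_ee, mq_eo, mq_oe, mq_oo, mul_neg, neg_mul,
      neg_neg, Prod.fst_sub, Prod.fst_add, Prod.fst_neg, map_sub, map_add, map_neg,
      smul_sub, smul_add, smul_neg, map_zero, smul_zero, sub_zero]
    convert zero_mem (PP σ) using 1
    linear_combination (norm := module) KEY3pm σ a c ha hc
  · have hx : tauQ σ ((a,0) : R × R) = (a,0) := by simp [tauQ, ha, Prod.ext_iff]
    rw [LL_tmul, sComm_even σ hx]
    simp only [tq_e, tq_o, ha, hd, mq_ee, mq_eo, mq_oe, mq_oo, mul_neg, neg_mul,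
      neg_neg, Prod.fst_sub, Prod.fst_add, Prod.fst_neg, map_sub, map_add, map_neg,
      smul_sub, smul_add, smul_neg, map_zero, smul_zero, sub_zero]
    exact Submodule.subset_span ⟨a, d, rfl⟩
  · have hx : tauQ σ ((a,0) : R × R) = (a,0) := by simp [tauQ, ha, Prod.ext_iff]
    rw [LL_tmul, sComm_even σ hx]
    simp only [tq_e, tq_o, ha, hd, mq_ee, mq_eo, mq_oe, mq_oo, mul_neg, neg_mul,
      neg_neg, Prod.fst_sub, Prod.fst_add, Prod.fst_neg, map_sub, map_add, map_neg,
      smul_sub, smul_add, smul_neg, map_zero, smul_zero, sub_zero]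
    exact Submodule.subset_span ⟨a, d, rfl⟩
  · have hx : tauQ σ ((a,0) : R × R) = -((a,0) : R × R) := by simp [tauQ, ha, Prod.ext_iff]
    rw [LL_tmul, sComm_odd σ hx]
    simp only [tq_e, tq_o, ha, hc, mq_ee, mq_eo, mq_oe, mq_oo, mul_neg, neg_mul,
      neg_neg, Prod.fst_sub, Prod.fst_add, Prod.fst_neg, map_sub, map_add, map_neg,
      smul_sub, smul_add, smul_neg, map_zero, smul_zero, sub_zero]
    convert zero_mem (PP σ) using 1
    linear_combination (norm := module) KEY3mp σ a c ha hc
  · have hx : tauQ σ ((a,0) : R × R) = -((a,0) : R × R) := by simp [tauQ, ha, Prod.ext_iff]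
    rw [LL_tmul, sComm_odd σ hx]
    simp only [tq_e, tq_o, ha, hc, mq_ee, mq_eo, mq_oe, mq_oo, mul_neg, neg_mul,
      neg_neg, Prod.fst_sub, Prod.fst_add, Prod.fst_neg, map_sub, map_add, map_neg,
      smul_sub, smul_add, smul_neg, map_zero, smul_zero, sub_zero]
    convert zero_mem (PP σ) using 1
    linear_combination (norm := module) KEY3mm σ a c ha hc
  · have hx : tauQ σ ((a,0) : R × R) = -((a,0) : R × R) := by simp [tauQ, ha, Prod.ext_iff]
    rw [LL_tmul, sComm_odd σ hx]
    simp only [tq_e, tq_o, ha, hd, mq_ee, mq_eo, mq_oe, mq_oo, mul_neg, neg_mul,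
      neg_neg, Prod.fst_sub, Prod.fst_add, Prod.fst_neg, map_sub, map_add, map_neg,
      smul_sub, smul_add, smul_neg, map_zero, smul_zero, sub_zero]
    exact Submodule.subset_span ⟨a, d, rfl⟩
  · have hx : tauQ σ ((a,0) : R × R) = -((a,0) : R × R) := by simp [tauQ, ha, Prod.ext_iff]
    rw [LL_tmul, sComm_odd σ hx]
    simp only [tq_e, tq_o, ha, hd, mq_ee, mq_eo, mq_oe, mq_oo, mul_neg, neg_mul,
      neg_neg, Prod.fst_sub, Prod.fst_add, Prod.fst_neg, map_sub, map_add, map_neg,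
      smul_sub, smul_add, smul_neg, map_zero, smul_zero, sub_zero]
    exact Submodule.subset_span ⟨a, d, rfl⟩
  · have hx : tauQ σ ((0,b) : R × R) = -((0,b) : R × R) := by simp [tauQ, hb, Prod.ext_iff]
    rw [LL_tmul, sComm_odd σ hx]
    simp only [tq_e, tq_o, hb, hc, hb, mq_ee, mq_eo, mq_oe, mq_oo, mul_neg, neg_mul,
      neg_neg, Prod.fst_sub, Prod.fst_add, Prod.fst_neg, map_sub, map_add, map_neg,
      smul_sub, smul_add, smul_neg, map_zero, smul_zero, sub_zero]
    exact mixed_mem σ b c 1 0 (par_o1 σ hb) (par_e0 σ hc)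
  · have hx : tauQ σ ((0,b) : R × R) = -((0,b) : R × R) := by simp [tauQ, hb, Prod.ext_iff]
    rw [LL_tmul, sComm_odd σ hx]
    simp only [tq_e, tq_o, hb, hc, hb, mq_ee, mq_eo, mq_oe, mq_oo, mul_neg, neg_mul,
      neg_neg, Prod.fst_sub, Prod.fst_add, Prod.fst_neg, map_sub, map_add, map_neg,
      smul_sub, smul_add, smul_neg, map_zero, smul_zero, sub_zero]
    exact mixed_mem σ b c 1 1 (par_o1 σ hb) (par_e1 σ hc)
  · have hx : tauQ σ ((0,b) : R × R) = -((0,b) : R × R) := by simp [tauQ, hb, Prod.ext_iff]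
    rw [LL_tmul, sComm_odd σ hx]
    simp only [tq_e, tq_o, hd, hb, mq_ee, mq_eo, mq_oe, mq_oo, mul_neg, neg_mul,
      neg_neg, Prod.fst_sub, Prod.fst_add, Prod.fst_neg, map_sub, map_add, map_neg,
      smul_sub, smul_add, smul_neg, map_zero, smul_zero, sub_zero]
    convert zero_mem (PP σ) using 1
    linear_combination (norm := module) KEY4pp σ b d hb hd
  · have hx : tauQ σ ((0,b) : R × R) = -((0,b) : R × R) := by simp [tauQ, hb, Prod.ext_iff]
    rw [LL_tmul, sComm_odd σ hx]
    simp only [tq_e, tq_o, hd, hb, mq_ee, mq_eo, mq_oe, mq_oo, mul_neg, neg_mul,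
      neg_neg, Prod.fst_sub, Prod.fst_add, Prod.fst_neg, map_sub, map_add, map_neg,
      smul_sub, smul_add, smul_neg, map_zero, smul_zero, sub_zero]
    convert zero_mem (PP σ) using 1
    linear_combination (norm := module) KEY4pm σ b d hb hd
  · have hx : tauQ σ ((0,b) : R × R) = (0,b) := by simp [tauQ, hb, Prod.ext_iff]
    rw [LL_tmul, sComm_even σ hx]
    simp only [tq_e, tq_o, hb, hc, hb, mq_ee, mq_eo, mq_oe, mq_oo, mul_neg, neg_mul,
      neg_neg, Prod.fst_sub, Prod.fst_add, Prod.fst_neg, map_sub, map_add, map_neg,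
      smul_sub, smul_add, smul_neg, map_zero, smul_zero, sub_zero]
    exact mixed_mem σ b c 0 0 (par_o0 σ hb) (par_e0 σ hc)
  · have hx : tauQ σ ((0,b) : R × R) = (0,b) := by simp [tauQ, hb, Prod.ext_iff]
    rw [LL_tmul, sComm_even σ hx]
    simp only [tq_e, tq_o, hb, hc, hb, mq_ee, mq_eo, mq_oe, mq_oo, mul_neg, neg_mul,
      neg_neg, Prod.fst_sub, Prod.fst_add, Prod.fst_neg, map_sub, map_add, map_neg,
      smul_sub, smul_add, smul_neg, map_zero, smul_zero, sub_zero]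
    exact mixed_mem σ b c 0 1 (par_o0 σ hb) (par_e1 σ hc)
  · have hx : tauQ σ ((0,b) : R × R) = (0,b) := by simp [tauQ, hb, Prod.ext_iff]
    rw [LL_tmul, sComm_even σ hx]
    simp only [tq_e, tq_o, hd, hb, mq_ee, mq_eo, mq_oe, mq_oo, mul_neg, neg_mul,
      neg_neg, Prod.fst_sub, Prod.fst_add, Prod.fst_neg, map_sub, map_add, map_neg,
      smul_sub, smul_add, smul_neg, map_zero, smul_zero, sub_zero]
    convert zero_mem (PP σ) using 1
    linear_combination (norm := module) KEY4mp σ b d hb hd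
  · have hx : tauQ σ ((0,b) : R × R) = (0,b) := by simp [tauQ, hb, Prod.ext_iff]
    rw [LL_tmul, sComm_even σ hx]
    simp only [tq_e, tq_o, hd, hb, mq_ee, mq_eo, mq_oe, mq_oo, mul_neg, neg_mul,
      neg_neg, Prod.fst_sub, Prod.fst_add, Prod.fst_neg, map_sub, map_add, map_neg,
      smul_sub, smul_add, smul_neg, map_zero, smul_zero, sub_zero]
    convert zero_mem (PP σ) using 1
    linear_combination (norm := module) KEY4mm σ b d hb hd

end

section
variable (σ : R ≃ₐ[k] R)

lemma key_mem (hσ : ∀ a, σ (σ a) = a) (w : (R × R) ⊗[k] (R × R)) : LL σ w ∈ PP σ := by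
  have h1 : ∀ x ∈ S4 σ, ∀ y : R × R, LL σ (x ⊗ₜ[k] y) ∈ PP σ := by
    intro x hx y
    have hle : Submodule.span k (S4 σ) ≤
        (PP σ).comap ((LL σ) ∘ₗ (TensorProduct.mk k (R × R) (R × R) x)) := by
      rw [Submodule.span_le]; intro y' hy'; exact C1 σ hσ x hx y' hy'
    have hy : y ∈ Submodule.span k (S4 σ) := by rw [S4_span σ hσ]; trivial
    simpa using hle hy
  have h2 : ∀ (x y : R × R), LL σ (x ⊗ₜ[k] y) ∈ PP σ := by
    intro x y
    have hle : Submodule.span k (S4 σ) ≤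
        (PP σ).comap ((LL σ) ∘ₗ ((TensorProduct.mk k (R × R) (R × R)).flip y)) := by
      rw [Submodule.span_le]; intro x' hx'; exact h1 x' hx' y
    have hx : x ∈ Submodule.span k (S4 σ) := by rw [S4_span σ hσ]; trivial
    simpa using hle hx
  have hle : (⊤ : Submodule k ((R × R) ⊗[k] (R × R))) ≤ (PP σ).comap (LL σ) := by
    rw [← TensorProduct.span_tmul_eq_top k (R × R) (R × R), Submodule.span_le]
    rintro _ ⟨x, y, rfl⟩; exact h2 x y
  exact hle trivial

lemma repr_exists (w : (R × R) ⊗[k] (R × R)) :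
    ∃ (m : ℕ) (x y : Fin m → R × R), w = ∑ i, x i ⊗ₜ[k] y i := by
  induction w using TensorProduct.induction_on with
  | zero => exact ⟨0, ![], ![], by simp⟩
  | tmul x y => exact ⟨1, ![x], ![y], by simp⟩
  | add w1 w2 ih1 ih2 =>
    obtain ⟨m1, x1, y1, rfl⟩ := ih1
    obtain ⟨m2, x2, y2, rfl⟩ := ih2
    refine ⟨m1 + m2, Fin.append x1 x2, Fin.append y1 y2, ?_⟩
    rw [Fin.sum_univ_add]
    simp [Fin.append_left, Fin.append_right]

lemma hcl_smul_l (c : k) (x y : R × R) :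
    c • hcl (k:=k) (R × R) (mulQ σ) (tauQ σ) x y = hcl (k:=k) (R × R) (mulQ σ) (tauQ σ) (c • x) y := by
  rw [hcl_mk, hcl_mk, ← map_smul, TensorProduct.smul_tmul']

lemma bridge (hσ : ∀ a, σ (σ a) = a) (a b : R) :
    sCommF (k:=k) (R × R) (mulQ σ) (tauQ σ) ((a, 0) : R × R) ((0, b) : R × R)
      = ((0 : R), sCommF (k:=k) R (· * ·) (⇑σ) a b) := by
  simp only [sCommF, mulQ, tauQ]
  simp only [Prod.ext_iff, Prod.mk_add_mk, Prod.mk_sub_mk, Prod.smul_mk]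
  constructor
  · simp [map_add, map_sub, map_neg, hσ, mul_add, add_mul, mul_sub, sub_mul, mul_neg, neg_mul]
  · simp only [map_add, map_sub, map_neg, map_zero, hσ, mul_add, add_mul, mul_sub, sub_mul,
      mul_neg, neg_mul, mul_zero, zero_mul, smul_add, smul_sub, smul_neg, add_zero, zero_add,
      sub_zero, neg_zero]
    module

end

section
variable (σ : R ≃ₐ[k] R)

lemma CommQ_mk_tmul (hσ : ∀ a, σ (σ a) = a) (x y : R × R) :
    CommQ σ hσ (Submodule.mkQ _ (x ⊗ₜ[k] y))
      = sCommF (k:=k) (R × R) (mulQ σ) (tauQ σ) x y := CommQ_hcl σ hσ x y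

lemma LL_apply (w : (R × R) ⊗[k] (R × R)) : LL σ w =
    Submodule.mkQ _ w - (⅟(2:k)) • nL σ ((TensorProduct.lift (scB σ) w).1) := rfl

lemma HC1_eq_ker (hσ : ∀ a, σ (σ a) = a) :
    HC1Set (k:=k) (R × R) (mulQ σ) (tauQ σ) = {z | CommQ σ hσ z = 0} := by
  ext z
  simp only [HC1Set, Set.mem_setOf_eq]
  constructor
  · rintro ⟨m, x, y, rfl, hsum⟩
    rw [map_sum]
    simp only [CommQ_hcl σ hσ]
    exact hsum
  · intro hz
    obtain ⟨w, rfl⟩ := Submodule.mkQ_surjective _ z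
    obtain ⟨m, x, y, rfl⟩ := repr_exists w
    refine ⟨m, x, y, by rw [map_sum]; simp only [hcl_mk], ?_⟩
    rw [map_sum] at hz
    simp only [map_sum, CommQ_mk_tmul σ hσ] at hz
    exact hz

lemma PP_repr : ∀ z ∈ PP σ,
    ∃ (m : ℕ) (a b : Fin m → R), z = ∑ i, hcl (k:=k) (R × R) (mulQ σ) (tauQ σ) (a i, 0) (0, b i) := by
  intro z hz
  induction hz using Submodule.span_induction with
  | mem x hx => obtain ⟨a, b, rfl⟩ := hx; exact ⟨1, ![a], ![b], by simp⟩
  | zero => exact ⟨0, ![], ![], by simp⟩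
  | add u v hu hv ihu ihv =>
    obtain ⟨m1, a1, b1, rfl⟩ := ihu
    obtain ⟨m2, a2, b2, rfl⟩ := ihv
    exact ⟨m1 + m2, Fin.append a1 a2, Fin.append b1 b2, by
      rw [Fin.sum_univ_add]; simp [Fin.append_left, Fin.append_right]⟩
  | smul c u hu ihu =>
    obtain ⟨m, a, b, rfl⟩ := ihu
    refine ⟨m, fun i => c • a i, b, ?_⟩
    rw [Finset.smul_sum]
    refine Finset.sum_congr rfl fun i _ => ?_
    rw [hcl_smul_l]
    congr 1
    rw [Prod.smul_mk, smul_zero]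

lemma RHS_eq (hσ : ∀ a, σ (σ a) = a) :
    {z | ∃ (m : ℕ) (a b : Fin m → R),
        z = ∑ i, hcl (k:=k) (R × R) (mulQ σ) (tauQ σ) (a i, 0) (0, b i) ∧
        ∑ i, sCommF (k := k) R (· * ·) ⇑σ (a i) (b i) = 0}
      = {z | z ∈ PP σ ∧ CommQ σ hσ z = 0} := by
  ext z
  simp only [Set.mem_setOf_eq]
  constructor
  · rintro ⟨m, a, b, rfl, hsum⟩
    refine ⟨Submodule.sum_mem _ fun i _ => Submodule.subset_span ⟨a i, b i, rfl⟩, ?_⟩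
    rw [map_sum]
    simp only [CommQ_hcl σ hσ, bridge σ hσ]
    rw [Prod.ext_iff]
    constructor
    · rw [Prod.fst_sum]; simp
    · rw [Prod.snd_sum]; simpa using hsum
  · rintro ⟨hzP, hz0⟩
    obtain ⟨m, a, b, rfl⟩ := PP_repr σ _ hzP
    refine ⟨m, a, b, rfl, ?_⟩
    rw [map_sum] at hz0
    simp only [CommQ_hcl σ hσ, bridge σ hσ] at hz0
    have h2 := congrArg Prod.snd hz0
    rw [Prod.snd_sum] at h2
    simpa using h2

end

end Aux

/-- `HC₁(R⊗Q1)` consists exactly of the classes `∑_j h(a_j⊗1, b_j⊗ν)` with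
`a_j, b_j ∈ R` and `∑_j [a_j, b_j] = 0` in `R`. -/
theorem HC1_RQ1_description (σ : R ≃ₐ[k] R) (hσ : ∀ a, σ (σ a) = a) :
    HC1Set (k := k) (R × R) (mulQ σ) (tauQ σ)
      = {z | ∃ (m : ℕ) (a b : Fin m → R),
          z = ∑ i, hcl (k := k) (R × R) (mulQ σ) (tauQ σ) (a i, 0) (0, b i) ∧
          ∑ i, sCommF (k := k) R (· * ·) ⇑σ (a i) (b i) = 0} := by
  rw [HC1_eq_ker σ hσ, RHS_eq σ hσ]
  ext z
  simp only [Set.mem_setOf_eq]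
  constructor
  · intro hz
    refine ⟨?_, hz⟩
    obtain ⟨w, rfl⟩ := Submodule.mkQ_surjective _ z
    have h := key_mem σ hσ w
    rw [LL_apply] at h
    have hz' : TensorProduct.lift (scB σ) w = 0 := hz
    rw [hz'] at h
    simpa using h
  · exact fun h => h.2
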